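/- If a graph contains two distinct cycles sharing at least two vertices, then it contains a cycle of even length. -/

import Mathlib

open SimpleGraph Finset

open scoped Classical in
/-- The adjacency matrix of a graph over `ℝ` (using classical decidability). -/
noncomputable def adjMat {V : Type*} [Fintype V] [DecidableEq V] (G : SimpleGraph V) :
    Matrix V V ℝ :=
  fun a b => if G.Adj a b then 1 else 0

theorem adjMat_isHermitian {V : Type*} [Fintype V] [DecidableEq V] (G : SimpleGraph V) :
    (adjMat G).IsHermitian := by
  ext a b
  rw [Matrix.conjTranspose_apply]
  by_cases h : G.Adj a b
  · simp [adjMat, h, h.symm]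
  · simp [adjMat, h, mt (fun h' : G.Adj b a => h'.symm) h]

/-- The spectral radius (specRad) (largest adjacency eigenvalue) of a graph. -/
noncomputable def specRad {V : Type*} [Fintype V] [DecidableEq V]
    (G : SimpleGraph V) : ℝ :=
  ⨆ a : V, (adjMat_isHermitian G).eigenvalues a

/-- A cactus: any two distinct cycles (distinct as edge sets) share at most one vertex. -/
def IsCactus {V : Type*} [DecidableEq V] (G : SimpleGraph V) : Prop :=
  ∀ ⦃u v : V⦄ (c₁ : G.Walk u u) (c₂ : G.Walk v v), c₁.IsCycle → c₂.IsCycle →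
    c₁.edges.toFinset ≠ c₂.edges.toFinset →
      (c₁.support.toFinset ∩ c₂.support.toFinset).card ≤ 1

/-- A unicyclic graph: connected with exactly one cycle (one cycle edge set). -/
def Unicyclic {V : Type*} [DecidableEq V] (G : SimpleGraph V) : Prop :=
  G.Connected ∧ ∃! E : Finset (Sym2 V), ∃ (w : V) (c : G.Walk w w),
    c.IsCycle ∧ c.edges.toFinset = E

/-- The star `K_{1,n-1}` on `Fin n` with center `0`. -/
def starGraph (n : ℕ) : SimpleGraph (Fin n) where
  Adj a b := a ≠ b ∧ ((a : ℕ) = 0 ∨ (b : ℕ) = 0)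
  symm := ⟨by tauto⟩
  loopless := ⟨by tauto⟩

/-- `K_{1,n-1}^+`: the star plus one edge between the leaves `1` and `2`. -/
def starPlus (n : ℕ) : SimpleGraph (Fin n) where
  Adj a b := a ≠ b ∧ ((a : ℕ) = 0 ∨ (b : ℕ) = 0 ∨ ((a : ℕ) ≤ 2 ∧ (b : ℕ) ≤ 2))
  symm := ⟨by tauto⟩
  loopless := ⟨by tauto⟩

/-- `H_n`: the star `K_{1,n-1}` plus `⌊(n-1)/2⌋` independent edges `(1,2), (3,4), …`
between pairs of leaves. -/
def Hgraph (n : ℕ) : SimpleGraph (Fin n) where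
  Adj a b := a ≠ b ∧ ((a : ℕ) = 0 ∨ (b : ℕ) = 0 ∨
    ((a : ℕ) % 2 = 1 ∧ (b : ℕ) = a + 1) ∨ ((b : ℕ) % 2 = 1 ∧ (a : ℕ) = b + 1))
  symm := ⟨by tauto⟩
  loopless := ⟨by tauto⟩

/-- Rewiring: delete the edges `v w` and add the edges `u w` for `w ∈ S`. -/
def rewire {V : Type*} (G : SimpleGraph V) (u v : V) (S : Set V) : SimpleGraph V :=
  SimpleGraph.fromEdgeSet ((G.edgeSet \ {e | ∃ w ∈ S, e = s(v, w)}) ∪ {e | ∃ w ∈ S, e = s(u, w)})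

/-- An edge lies in a triangle of `G`. -/
def InTriangle {V : Type*} (G : SimpleGraph V) (e : Sym2 V) : Prop :=
  ∃ a b c : V, G.Adj a b ∧ G.Adj b c ∧ G.Adj a c ∧
    (e = s(a, b) ∨ e = s(b, c) ∨ e = s(a, c))

/-!
Suppose `c₁` is odd. As the cycles differ, some edge of `c₂` lies outside `c₁`, say on the
`x`–`y` arc of `c₂` between two common vertices. Running along that arc from the edge in both
directions until `c₁` is met gives an ear of `c₁`: a path `R` between distinct vertices `a`, `b`
of `c₁`, meeting `c₁` only at its ends and not itself an edge of `c₁`. The vertices `a`, `b` cut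
`c₁` into paths `P₁`, `P₂`, and `P₁ R⁻¹`, `P₂ R⁻¹` are cycles whose lengths add up to
`|c₁| + 2|R|`, which is odd; so one of them is even.
-/

namespace SimpleGraph

variable {V : Type*} {G : SimpleGraph V}

/-- The last field only matters when `R` is a single edge: a longer ear has no edge in `H`. -/
structure Subgraph.IsEar (H : G.Subgraph) {a b : V} (R : G.Walk a b) : Prop where
  isPath : R.IsPath
  start_mem : a ∈ H.verts
  end_mem : b ∈ H.verts
  eq_or_eq_of_mem : ∀ z ∈ R.support, z ∈ H.verts → z = a ∨ z = b
  exists_edge_notMem : ∃ e ∈ R.edges, e ∉ H.edgeSet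

lemma Subgraph.IsEar.ne {H : G.Subgraph} {a b : V} {R : G.Walk a b} (hR : H.IsEar R) :
    a ≠ b := by
  rintro rfl
  obtain ⟨e, he, -⟩ := hR.exists_edge_notMem
  simp [Walk.edges_eq_nil.mpr (Walk.isPath_iff_nil.mp hR.isPath)] at he

namespace Walk

lemma IsPath.exists_isPath_to_first_mem {S : Set V} {z y : V} {t : G.Walk z y}
    (ht : t.IsPath) (hy : y ∈ S) :
    ∃ b ∈ S, ∃ q : G.Walk z b, q.IsPath ∧ q.support ⊆ t.support ∧
      ∀ w ∈ q.support, w ∈ S → w = b := by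
  induction t with
  | nil => exact ⟨_, hy, .nil, by simp, by simp, by simp⟩
  | @cons z w y hadj t ih =>
    by_cases hz : z ∈ S
    · exact ⟨z, hz, .nil, by simp, by simp, by simp⟩
    obtain ⟨b, hb, q, hq, hqt, hqS⟩ := ih ht.of_cons hy
    have hzt : z ∉ t.support := ((cons_isPath_iff hadj t).mp ht).2
    refine ⟨b, hb, cons hadj q, hq.cons fun h => hzt (hqt h), ?_, ?_⟩
    · exact List.cons_subset_cons z hqt
    · simp only [support_cons, List.mem_cons, forall_eq_or_imp]
      exact ⟨fun h => absurd h hz, hqS⟩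

lemma IsPath.exists_isEar {H : G.Subgraph} {x y : V} {p : G.Walk x y} (hp : p.IsPath)
    (hx : x ∈ H.verts) (hy : y ∈ H.verts) (he : ∃ e ∈ p.edges, e ∉ H.edgeSet) :
    ∃ (a b : V) (R : G.Walk a b), H.IsEar R := by
  induction p with
  | nil => simp at he
  | @cons x w y hadj t ih =>
    have hxt : x ∉ t.support := ((cons_isPath_iff hadj t).mp hp).2
    by_cases hw : w ∈ H.verts
    · by_cases hxw : s(x, w) ∈ H.edgeSet
      · refine ih hp.of_cons hw hy ?_
        obtain ⟨e, he, heH⟩ := he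
        rcases List.mem_cons.mp he with rfl | he
        · exact absurd hxw heH
        · exact ⟨e, he, heH⟩
      · refine ⟨x, w, cons hadj .nil, ⟨by simp [hadj.ne], hx, hw, ?_, ⟨_, by simp, hxw⟩⟩⟩
        simp
    · obtain ⟨b, hb, q, hq, hqt, hqH⟩ := hp.of_cons.exists_isPath_to_first_mem hy
      refine ⟨x, b, cons hadj q, ⟨hq.cons fun h => hxt (hqt h), hx, hb, ?_, ?_⟩⟩
      · simp only [support_cons, List.mem_cons, forall_eq_or_imp]
        exact ⟨by simp, fun z hz hzH => .inr (hqH z hz hzH)⟩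
      · exact ⟨s(x, w), by simp, fun h => hw (H.edge_vert (H.adj_symm h))⟩

lemma IsPath.isCycle_append_reverse_of_ne {a b : V} {p q : G.Walk a b} (hp : p.IsPath)
    (hq : q.IsPath) (hpq : p ≠ q) (hint : ∀ z ∈ p.support, z ∈ q.support → z = a ∨ z = b) :
    (p.append q.reverse).IsCycle := by
  refine hp.isCycle_append hq.reverse (fun z hzp hzq => ?_) ?_
  · have hp' : (a :: p.support.tail).Nodup := p.cons_tail_support ▸ hp.support_nodup
    have hq' : (b :: q.reverse.support.tail).Nodup :=
      q.reverse.cons_tail_support ▸ hq.reverse.support_nodup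
    have hzq' : z ∈ q.support := by simpa using List.mem_of_mem_tail hzq
    rcases hint z (List.mem_of_mem_tail hzp) hzq' with rfl | rfl
    · exact (List.nodup_cons.mp hp').1 hzp
    · exact (List.nodup_cons.mp hq').1 hzq
  · by_contra! h
    exact hpq (eq_of_length_le_one h.1 (by simpa using h.2))

end Walk

variable [DecidableEq V]

lemma Walk.IsCycle.exists_two_paths {u a b : V} {c : G.Walk u u} (hc : c.IsCycle)
    (ha : a ∈ c.support) (hb : b ∈ c.support) (hab : a ≠ b) :
    ∃ P₁ P₂ : G.Walk a b, P₁.IsPath ∧ P₂.IsPath ∧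
      P₁.toSubgraph ⊔ P₂.toSubgraph = c.toSubgraph ∧ P₁.length + P₂.length = c.length := by
  set d := c.rotate a ha
  have hd : d.IsCycle := hc.rotate ha
  have hb' : b ∈ d.support := (mem_support_rotate_iff c a ha).mpr hb
  have hsplit := d.take_spec hb'
  refine ⟨d.takeUntil b hb', (d.dropUntil b hb').reverse, hd.isPath_takeUntil hb', ?_, ?_, ?_⟩
  · exact (IsCycle.isPath_of_append_right (not_nil_of_ne hab) (by rwa [hsplit])).reverse
  · rw [toSubgraph_reverse, ← toSubgraph_append, hsplit, toSubgraph_rotate]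
  · rw [length_reverse, ← length_append, hsplit, length_rotate]

open Walk in
lemma Subgraph.IsEar.exists_even_isCycle {u a b : V} {c : G.Walk u u}
    (hc : c.IsCycle) {R : G.Walk a b} (hR : c.toSubgraph.IsEar R) :
    ∃ (w : V) (c' : G.Walk w w), c'.IsCycle ∧ Even c'.length := by
  by_cases hev : Even c.length
  · exact ⟨u, c, hc, hev⟩
  obtain ⟨P₁, P₂, hP₁, hP₂, hsup, hlen⟩ := hc.exists_two_paths
    ((mem_verts_toSubgraph c).mp hR.start_mem) ((mem_verts_toSubgraph c).mp hR.end_mem) hR.ne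
  have hcycle : ∀ P : G.Walk a b, P.IsPath → P.toSubgraph ≤ c.toSubgraph →
      (P.append R.reverse).IsCycle := by
    intro P hP hPc
    refine hP.isCycle_append_reverse_of_ne hR.isPath ?_ fun z hzP hzR =>
      hR.eq_or_eq_of_mem z hzR (Subgraph.verts_mono hPc ((mem_verts_toSubgraph P).mpr hzP))
    rintro rfl
    obtain ⟨e, he, heH⟩ := hR.exists_edge_notMem
    exact heH (Subgraph.edgeSet_mono hPc ((mem_edges_toSubgraph P).mpr he))
  have h₁ := hcycle P₁ hP₁ (hsup ▸ le_sup_left)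
  have h₂ := hcycle P₂ hP₂ (hsup ▸ le_sup_right)
  rcases Nat.even_or_odd (P₁.length + R.length) with hodd | hodd
  · exact ⟨a, _, h₁, by simpa using hodd⟩
  · refine ⟨a, _, h₂, ?_⟩
    rw [length_append, length_reverse]
    grind

lemma Walk.IsCycle.exists_isEar {H : G.Subgraph} {v x y : V} {c : G.Walk v v}
    (hc : c.IsCycle) (hx : x ∈ c.support) (hy : y ∈ c.support) (hxy : x ≠ y)
    (hxH : x ∈ H.verts) (hyH : y ∈ H.verts) (he : ∃ e ∈ c.edges, e ∉ H.edgeSet) :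
    ∃ (a b : V) (R : G.Walk a b), H.IsEar R := by
  obtain ⟨P₁, P₂, hP₁, hP₂, hsup, -⟩ := hc.exists_two_paths hx hy hxy
  obtain ⟨e, he, heH⟩ := he
  rw [← mem_edges_toSubgraph, ← hsup, Subgraph.edgeSet_sup, Set.mem_union,
    mem_edges_toSubgraph, mem_edges_toSubgraph] at he
  rcases he with he | he
  · exact hP₁.exists_isEar hxH hyH ⟨e, he, heH⟩
  · exact hP₂.exists_isEar hxH hyH ⟨e, he, heH⟩

lemma Walk.IsCycle.exists_even_isCycle_of_mem_edges {u v x y : V} {e : Sym2 V}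
    {c₁ : G.Walk u u} {c₂ : G.Walk v v} (h₁ : c₁.IsCycle) (h₂ : c₂.IsCycle)
    (hx₁ : x ∈ c₁.support) (hx₂ : x ∈ c₂.support) (hy₁ : y ∈ c₁.support)
    (hy₂ : y ∈ c₂.support) (hxy : x ≠ y) (he₂ : e ∈ c₂.edges) (he₁ : e ∉ c₁.edges) :
    ∃ (w : V) (c : G.Walk w w), c.IsCycle ∧ Even c.length := by
  obtain ⟨a, b, R, hR⟩ := h₂.exists_isEar (H := c₁.toSubgraph) hx₂ hy₂ hxy
    ((mem_verts_toSubgraph c₁).mpr hx₁) ((mem_verts_toSubgraph c₁).mpr hy₁)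
    ⟨e, he₂, (mem_edges_toSubgraph c₁).not.mpr he₁⟩
  exact hR.exists_even_isCycle h₁

end SimpleGraph

theorem even_cycle_of_two_cycles_sharing_two_vertices_general {V : Type*} [DecidableEq V]
    (G : SimpleGraph V) (u v : V) (c₁ : G.Walk u u) (c₂ : G.Walk v v)
    (h₁ : c₁.IsCycle) (h₂ : c₂.IsCycle)
    (hne : c₁.edges.toFinset ≠ c₂.edges.toFinset)
    (hcommon : 2 ≤ (c₁.support.toFinset ∩ c₂.support.toFinset).card) :
    ∃ (w : V) (c : G.Walk w w), c.IsCycle ∧ Even c.length := by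
  obtain ⟨x, hx, y, hy, hxy⟩ := Finset.one_lt_card.mp hcommon
  simp only [Finset.mem_inter, List.mem_toFinset] at hx hy
  obtain ⟨e, he⟩ : ∃ e, ¬(e ∈ c₁.edges ↔ e ∈ c₂.edges) := by
    by_contra! h
    exact hne (by ext e; simpa using h e)
  by_cases he₁ : e ∈ c₁.edges
  · exact h₂.exists_even_isCycle_of_mem_edges h₁ hx.2 hx.1 hy.2 hy.1 hxy he₁ (by tauto)
  · exact h₁.exists_even_isCycle_of_mem_edges h₂ hx.1 hx.2 hy.1 hy.2 hxy (by tauto) he₁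

theorem even_cycle_of_two_cycles_sharing_two_vertices {V : Type*} [Fintype V] [DecidableEq V]
    (G : SimpleGraph V) (u v : V) (c₁ : G.Walk u u) (c₂ : G.Walk v v)
    (h₁ : c₁.IsCycle) (h₂ : c₂.IsCycle)
    (hne : c₁.edges.toFinset ≠ c₂.edges.toFinset)
    (hcommon : 2 ≤ (c₁.support.toFinset ∩ c₂.support.toFinset).card) :
    ∃ (w : V) (c : G.Walk w w), c.IsCycle ∧ Even c.length :=
  even_cycle_of_two_cycles_sharing_two_vertices_general G u v c₁ c₂ h₁ h₂ hne hcommon
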